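/- arXiv:1908.02268 — 3 statements merged into one kernel-verified Lean document; each statement's English description precedes it below -/
import Mathlib

section
/- Let (X, 𝒜, μ) be a measure space, let Q₀ ∈ 𝒜 satisfy μ(Q₀) < ∞, let ε₀ ∈ (0,1) and let k ≥ 1 be an integer. For each 1 ≤ ℓ ≤ k let ℱ_ℓ be a countable family of pairwise disjoint measurable subsets of Q₀ and set 𝒪_ℓ = ⋃_{Q ∈ ℱ_ℓ} Q. Assume: (i) 𝒪_k ⊆ 𝒪_{k−1} ⊆ ⋯ ⊆ 𝒪_1 ⊆ Q₀; (ii) for every 2 ≤ m ≤ k, every Q ∈ ℱ_{m−1} and every Q' ∈ ℱ_m, either Q ⊆ Q', or Q' ⊆ Q, or Q ∩ Q' = ∅; (iii) μ(𝒪_ℓ ∩ Q) ≤ ε₀ μ(Q) for every Q ∈ ℱ_{ℓ−1} and every 2 ≤ ℓ ≤ k. Then for all integers 1 ≤ m ≤ ℓ ≤ k and every Q ∈ ℱ_m one has μ(𝒪_ℓ ∩ Q) ≤ ε₀^{ℓ−m} μ(Q). -/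
/-!
Induction on `ℓ - m`. Fix `Q ∈ ℱ_m`. If `Q` lies inside a cube of `ℱ_{m+1}`, then
`Q ⊆ 𝒪_{m+1}` and (iii) gives `μ Q ≤ ε₀ μ Q`, so `Q` is null because `μ Q < ∞` and `ε₀ < 1`.
Otherwise, by (ii), every cube `Q'` of `ℱ_{m+1}` meeting `Q` lies inside `Q`, and
`𝒪_ℓ ∩ Q ⊆ 𝒪_{m+1}` is covered by these disjoint `Q'`. Summing the inductive bounds
`μ (𝒪_ℓ ∩ Q') ≤ ε₀^{ℓ-m-1} μ Q'` gives `ε₀^{ℓ-m-1} μ (𝒪_{m+1} ∩ Q)`, and (iii) supplies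
the last factor `ε₀`.
-/

open MeasureTheory Function
open scoped ENNReal

theorem ENNReal.eq_zero_of_le_mul_of_lt_one {a ε : ℝ≥0∞} (h : a ≤ ε * a) (hε : ε < 1)
    (ha : a ≠ ⊤) : a = 0 := by
  by_contra h0
  have : ε * a < 1 * a := ENNReal.mul_lt_mul_left h0 ha hε
  exact (h.trans_lt this).ne (one_mul a).symm

namespace MeasureTheory

variable {X : Type*} [MeasurableSpace X]

theorem measure_le_mul_measure_iUnion {ι : Type*} [Countable ι] {ν : Measure X}
    {G : ι → Set X} (hGm : ∀ j, MeasurableSet (G j)) (hGd : Pairwise (Disjoint on G))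
    {A : Set X} (hA : A ⊆ ⋃ j, G j) {c : ℝ≥0∞} (h : ∀ j, ν (A ∩ G j) ≤ c * ν (G j)) :
    ν A ≤ c * ν (⋃ j, G j) :=
  calc ν A ≤ ν (⋃ j, A ∩ G j) := by rw [← Set.inter_iUnion, Set.inter_eq_left.2 hA]
    _ ≤ ∑' j, ν (A ∩ G j) := measure_iUnion_le _
    _ ≤ ∑' j, c * ν (G j) := ENNReal.tsum_le_tsum h
    _ = c * ν (⋃ j, G j) := by rw [ENNReal.tsum_mul_left, measure_iUnion hGd hGm]

theorem measure_inter_le_pow_succ {ι : Type*} [Countable ι] {μ : Measure X} {ε : ℝ≥0∞}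
    {n : ℕ} {Q A : Set X} {G : ι → Set X} (hε : ε < 1) (hQ : μ Q ≠ ⊤)
    (hGm : ∀ j, MeasurableSet (G j)) (hGd : Pairwise (Disjoint on G))
    (hsmall : μ ((⋃ j, G j) ∩ Q) ≤ ε * μ Q)
    (hnested : ∀ j, Q ⊆ G j ∨ G j ⊆ Q ∨ Disjoint Q (G j))
    (hA : A ⊆ ⋃ j, G j) (hstep : ∀ j, G j ⊆ Q → μ (A ∩ G j) ≤ ε ^ n * μ (G j)) :
    μ (A ∩ Q) ≤ ε ^ (n + 1) * μ Q := by
  have hcell : ∀ j, μ.restrict Q (A ∩ G j) ≤ ε ^ n * μ.restrict Q (G j) := by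
    intro j
    rcases hnested j with hQG | hGQ | hdisj
    · -- `Q ⊆ ⋃ j, G j` turns `hsmall` into `μ Q ≤ ε * μ Q`
      have hQ0 : μ Q = 0 := by
        refine ENNReal.eq_zero_of_le_mul_of_lt_one ?_ hε hQ
        rwa [Set.inter_eq_right.2 (hQG.trans (Set.subset_iUnion G j))] at hsmall
      have : μ.restrict Q = 0 := Measure.restrict_eq_zero.2 hQ0
      simp [this]
    · calc μ.restrict Q (A ∩ G j) ≤ μ (A ∩ G j) := Measure.restrict_le_self _
        _ ≤ ε ^ n * μ (G j) := hstep j hGQ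
        _ = ε ^ n * μ.restrict Q (G j) := by
          rw [Measure.restrict_apply (hGm j), Set.inter_eq_left.2 hGQ]
    · have : μ.restrict Q (G j) = 0 := by
        rw [Measure.restrict_apply (hGm j), Set.disjoint_iff_inter_eq_empty.1 hdisj.symm,
          measure_empty]
      rw [this, mul_zero]
      exact (measure_mono_null Set.inter_subset_right this).le
  calc μ (A ∩ Q) ≤ μ.restrict Q A := Measure.le_restrict_apply _ _
    _ ≤ ε ^ n * μ.restrict Q (⋃ j, G j) := measure_le_mul_measure_iUnion hGm hGd hA hcell
    _ = ε ^ n * μ ((⋃ j, G j) ∩ Q) := by rw [Measure.restrict_apply (.iUnion hGm)]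
    _ ≤ ε ^ n * (ε * μ Q) := by gcongr
    _ = ε ^ (n + 1) * μ Q := by rw [← mul_assoc, ← pow_succ]

end MeasureTheory

theorem good_cover_iteration_general
    {X : Type*} [MeasurableSpace X] (μ : Measure X)
    (Q₀ : Set X) (hQ₀fin : μ Q₀ < ⊤)
    (ε₀ : ℝ≥0∞) (hε₀lt : ε₀ < 1)
    (k : ℕ)
    (F : ℕ → ℕ → Set X)
    (hFmeas : ∀ ℓ i, 1 ≤ ℓ → ℓ ≤ k → MeasurableSet (F ℓ i))
    (hFsub : ∀ ℓ i, 1 ≤ ℓ → ℓ ≤ k → F ℓ i ⊆ Q₀)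
    (hFdisj : ∀ ℓ, 1 ≤ ℓ → ℓ ≤ k →
      Pairwise (fun i j => Disjoint (F ℓ i) (F ℓ j)))
    (O : ℕ → Set X) (hO : ∀ ℓ, 1 ≤ ℓ → ℓ ≤ k → O ℓ = ⋃ i, F ℓ i)
    -- (i) nesting of the sets 𝒪_ℓ
    (hnest : ∀ ℓ, 2 ≤ ℓ → ℓ ≤ k → O ℓ ⊆ O (ℓ - 1))
    -- (ii) cubes of consecutive generations are nested or disjoint
    (hdyadic : ∀ ℓ i j, 2 ≤ ℓ → ℓ ≤ k →
      F (ℓ - 1) i ⊆ F ℓ j ∨ F ℓ j ⊆ F (ℓ - 1) i ∨ Disjoint (F (ℓ - 1) i) (F ℓ j))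
    -- (iii) the packing condition of the good ε₀-cover
    (hsmall : ∀ ℓ i, 2 ≤ ℓ → ℓ ≤ k →
      μ (O ℓ ∩ F (ℓ - 1) i) ≤ ε₀ * μ (F (ℓ - 1) i)) :
    ∀ m ℓ i, 1 ≤ m → m ≤ ℓ → ℓ ≤ k →
      μ (O ℓ ∩ F m i) ≤ ε₀ ^ (ℓ - m) * μ (F m i) := by
  have hanti : AntitoneOn O (Set.Icc 1 k) :=
    antitoneOn_of_succ_le Set.ordConnected_Icc fun a _ ha ha' => by
      rw [Order.succ_eq_add_one] at ha' ⊢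
      simpa using hnest (a + 1) (Nat.succ_le_succ ha.1) ha'.2
  have hbound : ∀ n m i, 1 ≤ m → m + n ≤ k → μ (O (m + n) ∩ F m i) ≤ ε₀ ^ n * μ (F m i) := by
    intro n
    induction n with
    | zero => simpa using fun m i _ _ => measure_mono Set.inter_subset_right
    | succ n ih =>
      intro m i hm hmn
      have hO' := hO (m + 1) (by omega) (by omega)
      refine measure_inter_le_pow_succ hε₀lt
        (measure_mono (hFsub m i hm (by omega)) |>.trans_lt hQ₀fin).ne
        (hFmeas (m + 1) · (by omega) (by omega)) (hFdisj (m + 1) (by omega) (by omega))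
        ?_ ?_ ?_ fun j _ => ?_
      · simpa [hO'] using hsmall (m + 1) i (by omega) (by omega)
      · exact fun j => by simpa using hdyadic (m + 1) i j (by omega) (by omega)
      · exact hO' ▸ hanti ⟨by omega, by omega⟩ ⟨by omega, by omega⟩ (by omega)
      · rw [← add_assoc, add_right_comm]
        exact ih (m + 1) j (by omega) (by omega)
  intro m ℓ i hm hmℓ hℓk
  simpa [Nat.add_sub_cancel' hmℓ] using hbound (ℓ - m) m i hm (by omega)

/-- **Iteration lemma for good ε₀-covers** (Lemma 3.2 of the paper, abstract
measure-theoretic form). Let `(X, 𝒜, μ)` be a measure space, `Q₀` measurable with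
`μ Q₀ < ∞`, `ε₀ ∈ (0,1)` and `k ≥ 1`. For each `1 ≤ ℓ ≤ k` let `ℱ_ℓ = {F ℓ i}_{i : ℕ}`
be a countable family of pairwise disjoint measurable subsets of `Q₀` and
`𝒪_ℓ = ⋃ i, F ℓ i`.  Assuming (i) the `𝒪_ℓ` are decreasing and contained in `Q₀`,
(ii) cubes of consecutive generations are nested or disjoint, and
(iii) `μ (𝒪_ℓ ∩ Q) ≤ ε₀ μ Q` for every `Q ∈ ℱ_{ℓ-1}`, `2 ≤ ℓ ≤ k`, one concludes
`μ (𝒪_ℓ ∩ Q) ≤ ε₀^{ℓ-m} μ Q` for every `Q ∈ ℱ_m`, `1 ≤ m ≤ ℓ ≤ k`. -/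
theorem good_cover_iteration
    {X : Type*} [MeasurableSpace X] (μ : Measure X)
    (Q₀ : Set X) (hQ₀m : MeasurableSet Q₀) (hQ₀fin : μ Q₀ < ⊤)
    (ε₀ : ℝ≥0∞) (hε₀pos : 0 < ε₀) (hε₀lt : ε₀ < 1)
    (k : ℕ) (hk : 1 ≤ k)
    (F : ℕ → ℕ → Set X)
    (hFmeas : ∀ ℓ i, 1 ≤ ℓ → ℓ ≤ k → MeasurableSet (F ℓ i))
    (hFsub : ∀ ℓ i, 1 ≤ ℓ → ℓ ≤ k → F ℓ i ⊆ Q₀)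
    (hFdisj : ∀ ℓ, 1 ≤ ℓ → ℓ ≤ k →
      Pairwise (fun i j => Disjoint (F ℓ i) (F ℓ j)))
    (O : ℕ → Set X) (hO : ∀ ℓ, 1 ≤ ℓ → ℓ ≤ k → O ℓ = ⋃ i, F ℓ i)
    -- (i) nesting of the sets 𝒪_ℓ
    (hnest : ∀ ℓ, 2 ≤ ℓ → ℓ ≤ k → O ℓ ⊆ O (ℓ - 1))
    (hO1 : O 1 ⊆ Q₀)
    -- (ii) cubes of consecutive generations are nested or disjoint
    (hdyadic : ∀ ℓ i j, 2 ≤ ℓ → ℓ ≤ k →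
      F (ℓ - 1) i ⊆ F ℓ j ∨ F ℓ j ⊆ F (ℓ - 1) i ∨ Disjoint (F (ℓ - 1) i) (F ℓ j))
    -- (iii) the packing condition of the good ε₀-cover
    (hsmall : ∀ ℓ i, 2 ≤ ℓ → ℓ ≤ k →
      μ (O ℓ ∩ F (ℓ - 1) i) ≤ ε₀ * μ (F (ℓ - 1) i)) :
    ∀ m ℓ i, 1 ≤ m → m ≤ ℓ → ℓ ≤ k →
      μ (O ℓ ∩ F m i) ≤ ε₀ ^ (ℓ - m) * μ (F m i) :=
  good_cover_iteration_general μ Q₀ hQ₀fin ε₀ hε₀lt k F hFmeas hFsub hFdisj O hO hnest hdyadic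
    hsmall
end

section
/- Let C ≥ 1, let 0 < ε₀ ≤ e^{−1}, set a = C/ε₀ (so a > 1), and let 0 < α ≤ ε₀²/(2C²). Then there exists a unique integer k₀ ≥ 2 such that a^{−(k₀+1)} < 2α ≤ a^{−k₀}, and this k₀ satisfies (1/(3(1 + log C))) · (log(α^{−1}) / log(ε₀^{−1})) ≤ k₀ ≤ log(α^{−1}) / log(ε₀^{−1}). -/
/-- **Quantitative estimate on the length of the good ε₀-cover** (estimate (3.est-k0)
in the proof of Lemma 3.3 of the paper).  Let `C ≥ 1`, `0 < ε₀ ≤ e⁻¹`, set `a = C/ε₀`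
(so `a > 1`), and let `0 < α ≤ ε₀²/(2C²)`.  Then there is a unique integer `k₀ ≥ 2`
with `a^{-(k₀+1)} < 2α ≤ a^{-k₀}`, and this `k₀` satisfies
`(1/(3(1+log C))) · (log α⁻¹ / log ε₀⁻¹) ≤ k₀ ≤ log α⁻¹ / log ε₀⁻¹`,
where `log` is the natural logarithm. -/
theorem length_of_good_cover
    (C ε₀ α : ℝ) (hC : 1 ≤ C) (hε₀pos : 0 < ε₀) (hε₀le : ε₀ ≤ Real.exp (-1))
    (hαpos : 0 < α) (hαle : α ≤ ε₀ ^ 2 / (2 * C ^ 2)) :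
    1 < C / ε₀ ∧
    ∃ k₀ : ℤ, (2 ≤ k₀ ∧
        (C / ε₀) ^ (-(k₀ + 1)) < 2 * α ∧ 2 * α ≤ (C / ε₀) ^ (-k₀)) ∧
      (∀ k : ℤ, 2 ≤ k → (C / ε₀) ^ (-(k + 1)) < 2 * α → 2 * α ≤ (C / ε₀) ^ (-k) →
        k = k₀) ∧
      (1 / (3 * (1 + Real.log C))) * (Real.log α⁻¹ / Real.log ε₀⁻¹) ≤ (k₀ : ℝ) ∧
      (k₀ : ℝ) ≤ Real.log α⁻¹ / Real.log ε₀⁻¹ := by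
  have hC0 : (0:ℝ) < C := lt_of_lt_of_le one_pos hC
  have hexp1 : Real.exp (-1) < 1 := by
    rw [show (1:ℝ) = Real.exp 0 from (Real.exp_zero).symm]
    exact Real.exp_lt_exp.2 (by norm_num)
  have hε1 : ε₀ < 1 := lt_of_le_of_lt hε₀le hexp1
  have ha1 : 1 < C / ε₀ := (one_lt_div hε₀pos).2 (lt_of_lt_of_le hε1 hC)
  set a := C / ε₀ with ha
  have ha0 : 0 < a := lt_trans one_pos ha1
  have hloga : 0 < Real.log a := Real.log_pos ha1
  have h2α : 0 < 2 * α := by linarith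
  have hlogeq : Real.log a = Real.log C + Real.log ε₀⁻¹ := by
    rw [ha, Real.log_div (by positivity) (ne_of_gt hε₀pos), Real.log_inv]; ring
  set c := Real.log C with hc
  set E := Real.log ε₀⁻¹ with hE
  have hc0 : 0 ≤ c := Real.log_nonneg hC
  have hE1 : 1 ≤ E := by
    rw [hE, Real.le_log_iff_exp_le (by positivity)]
    rw [le_inv_comm₀ (Real.exp_pos 1) hε₀pos]
    calc ε₀ ≤ Real.exp (-1) := hε₀le
    _ = (Real.exp 1)⁻¹ := by rw [Real.exp_neg]
  have hα1 : α < 1 := by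
    have h1 : ε₀ ^ 2 / (2 * C ^ 2) ≤ 1/2 := by
      rw [div_le_div_iff₀ (by positivity) (by norm_num)]
      nlinarith
    linarith
  set X := Real.log α⁻¹ with hX
  have hX0 : 0 < X := Real.log_pos ((lt_inv_comm₀ hαpos one_pos).1 (by simpa using hα1))
  set L := Real.log (2*α)⁻¹ / Real.log a with hL
  have key_le : ∀ k : ℤ, 2 * α ≤ a ^ (-k) ↔ (k:ℝ) ≤ L := by
    intro k
    rw [hL, le_div_iff₀ hloga, Real.log_inv]
    constructor
    · intro h
      have := Real.log_le_log h2α h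
      rw [Real.log_zpow] at this
      push_cast at this ⊢
      linarith
    · intro h
      have h2 : Real.log (2*α) ≤ ((-k : ℤ):ℝ) * Real.log a := by push_cast; linarith
      rw [← Real.log_zpow] at h2
      exact (Real.log_le_log_iff h2α (zpow_pos ha0 _)).1 h2
  have key_lt : ∀ k : ℤ, a ^ (-(k+1)) < 2 * α ↔ L < (k:ℝ) + 1 := by
    intro k
    rw [hL, div_lt_iff₀ hloga, Real.log_inv]
    constructor
    · intro h
      have := Real.log_lt_log (zpow_pos ha0 _) h
      rw [Real.log_zpow] at this
      push_cast at this ⊢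
      linarith
    · intro h
      have h2 : ((-(k+1) : ℤ):ℝ) * Real.log a < Real.log (2*α) := by push_cast; nlinarith
      rw [← Real.log_zpow] at h2
      exact (Real.log_lt_log_iff (zpow_pos ha0 _) h2α).1 h2
  set k₀ := ⌊L⌋ with hk₀
  have hfl : (k₀:ℝ) ≤ L := Int.floor_le L
  have hfl2 : L < (k₀:ℝ) + 1 := Int.lt_floor_add_one L
  have hL2 : (2:ℝ) ≤ L := by
    rw [← show ((2:ℤ):ℝ) = (2:ℝ) by norm_num, ← key_le 2]
    have hval : a ^ (-2 : ℤ) = ε₀ ^ 2 / C ^ 2 := by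
      rw [ha, zpow_neg, show (2:ℤ) = ((2:ℕ):ℤ) by norm_num, zpow_natCast]
      rw [div_pow, inv_div]
    rw [hval]
    rw [le_div_iff₀ (by positivity)] at hαle ⊢
    nlinarith
  have hk₀2 : 2 ≤ k₀ := by
    rw [hk₀, Int.le_floor]; exact_mod_cast hL2
  have hk₀2R : (2:ℝ) ≤ (k₀:ℝ) := by exact_mod_cast hk₀2
  have hlog2α : Real.log (2*α)⁻¹ = X - Real.log 2 := by
    rw [Real.log_inv, Real.log_mul (by norm_num) hαpos.ne', hX, Real.log_inv]; ring
  have hLprod : L * (c + E) = X - Real.log 2 := by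
    rw [hL, hlog2α, hlogeq]
    field_simp
  have hlog2pos : 0 < Real.log 2 := Real.log_pos (by norm_num)
  have hlog2le : Real.log 2 ≤ 3 := by
    have := Real.log_two_lt_d9
    linarith
  refine ⟨ha1, k₀, ⟨hk₀2, (key_lt k₀).2 hfl2, (key_le k₀).2 hfl⟩, ?_, ?_, ?_⟩
  · intro k hk2 hlt hle
    have h1 : (k:ℝ) ≤ L := (key_le k).1 hle
    have h2 : L < (k:ℝ) + 1 := (key_lt k).1 hlt
    have h3 : ⌊L⌋ = k := Int.floor_eq_iff.2 ⟨h1, by exact_mod_cast h2⟩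
    rw [hk₀, ← h3]
  · -- lower bound
    rw [div_mul_div_comm, one_mul, div_le_iff₀ (by positivity)]
    -- X ≤ k₀ * (3 * (1 + c) * E)
    have h1 : L * (c + E) ≤ (3 * (k₀:ℝ) - 3) * (c + E) := by
      apply mul_le_mul_of_nonneg_right (by linarith) (by linarith)
    nlinarith [mul_le_mul_of_nonneg_left (show (1:ℝ) ≤ E from hE1)
      (mul_nonneg (by linarith : (0:ℝ) ≤ 3 * (k₀:ℝ)) hc0)]
  · -- upper bound
    rw [le_div_iff₀ (by linarith)]
    have h1 : (k₀:ℝ) * (c + E) ≤ L * (c + E) :=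
      mul_le_mul_of_nonneg_right hfl (by linarith)
    nlinarith
end

section
/- Let d ≥ 1, let Ω ⊆ ℝ^d be open, let D = (d_{i,j})_{i,j=1}^d : Ω → M_d(ℝ) be continuously differentiable on Ω and pointwise antisymmetric (d_{i,j}(X) = −d_{j,i}(X) for all X ∈ Ω and all i, j), and let u, v : ℝ^d → ℝ be smooth functions whose supports are compact subsets of Ω. Then ∫_Ω D(X)∇u(X) · ∇v(X) dX = − ∫_Ω (div_C D)(X) · ∇u(X) v(X) dX. -/
open MeasureTheory
open scoped BigOperators

/-- The partial derivative `∂_i f (X)` of a scalar function on `ℝ^d`. -/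
noncomputable def partialDeriv {d : ℕ} (i : Fin d)
    (f : EuclideanSpace ℝ (Fin d) → ℝ) (X : EuclideanSpace ℝ (Fin d)) : ℝ :=
  fderiv ℝ f X (EuclideanSpace.single i 1)

/-!
On `Ω` write `S = D∇u`, i.e. `S i = Σ_j d_{ij} ∂_j u` (`mulVecGrad D u i`). Since `tsupport u ⊆ Ω`,
each `S i` extends by zero to a compactly supported `C¹` function on all of `ℝ^d`, so integrating
by parts in each coordinate gives `∫ S · ∇v = -∫ (div S) v`. By the product rule
`div S = div_C D · ∇u + Σ_{i,j} d_{ij} ∂_i ∂_j u`, and the last sum vanishes because it pairs the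
antisymmetric `D` with the symmetric Hessian of `u`.
-/

open Topology

theorem ContDiffOn.contDiff_mul_of_tsupport_subset {𝕜 E : Type*} [NontriviallyNormedField 𝕜]
    [NormedAddCommGroup E] [NormedSpace 𝕜 E] {n : WithTop ℕ∞} {f g : E → 𝕜} {Ω : Set E}
    (hΩ : IsOpen Ω) (hf : ContDiffOn 𝕜 n f Ω) (hg : ContDiff 𝕜 n g) (hgΩ : tsupport g ⊆ Ω) :
    ContDiff 𝕜 n (fun x => f x * g x) := by
  refine contDiff_iff_contDiffAt.2 fun x => ?_
  by_cases hx : x ∈ Ω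
  · exact (hf.contDiffAt (hΩ.mem_nhds hx)).mul hg.contDiffAt
  · have hg0 : g =ᶠ[𝓝 x] 0 := notMem_tsupport_iff_eventuallyEq.1 fun h => hx (hgΩ h)
    exact (contDiffAt_const (c := (0 : 𝕜))).congr_of_eventuallyEq
      (hg0.mono fun y hy => by simp [hy])

theorem integral_mul_fderiv_eq_neg_fderiv_mul_of_hasCompactSupport {E : Type*}
    [NormedAddCommGroup E] [NormedSpace ℝ E] [FiniteDimensional ℝ E] [MeasurableSpace E]
    [BorelSpace E] {μ : Measure E} [μ.IsAddHaarMeasure] {f g : E → ℝ}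
    (hf : ContDiff ℝ 1 f) (hg : ContDiff ℝ 1 g) (hfcs : HasCompactSupport f) (w : E) :
    ∫ x, f x * fderiv ℝ g x w ∂μ = -∫ x, fderiv ℝ f x w * g x ∂μ := by
  have hf' : Continuous (fderiv ℝ f · w) :=
    (hf.continuous_fderiv one_ne_zero).clm_apply continuous_const
  have hg' : Continuous (fderiv ℝ g · w) :=
    (hg.continuous_fderiv one_ne_zero).clm_apply continuous_const
  exact integral_mul_fderiv_eq_neg_fderiv_mul_of_integrable
    ((hf'.mul hg.continuous).integrable_of_hasCompactSupport (hfcs.fderiv_apply ℝ w).mul_right)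
    ((hf.continuous.mul hg').integrable_of_hasCompactSupport hfcs.mul_right)
    ((hf.continuous.mul hg.continuous).integrable_of_hasCompactSupport hfcs.mul_right)
    (fun x _ => hf.differentiable one_ne_zero x) (fun x _ => hg.differentiable one_ne_zero x)

theorem Finset.sum_sum_mul_eq_zero_of_antisymm_of_symm {ι R : Type*} [Fintype ι] [Ring R]
    [NoZeroDivisors R] [CharZero R] {A B : ι → ι → R}
    (hA : ∀ i j, A i j = -A j i) (hB : ∀ i j, B i j = B j i) :
    ∑ i, ∑ j, A i j * B i j = 0 := by
  have hneg : ∑ i, ∑ j, A i j * B i j = -∑ i, ∑ j, A i j * B i j := by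
    conv_lhs => rw [Finset.sum_comm]
    simp only [← Finset.sum_neg_distrib]
    exact Finset.sum_congr rfl fun j _ => Finset.sum_congr rfl fun i _ => by
      rw [hA, hB, neg_mul]
  exact CharZero.eq_neg_self_iff.1 hneg

section PartialDeriv

variable {d : ℕ} {f g : EuclideanSpace ℝ (Fin d) → ℝ} {X : EuclideanSpace ℝ (Fin d)}

theorem partialDeriv_mul {i : Fin d} (hf : DifferentiableAt ℝ f X)
    (hg : DifferentiableAt ℝ g X) :
    partialDeriv i (fun Y => f Y * g Y) X
      = partialDeriv i f X * g X + f X * partialDeriv i g X := by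
  simp only [partialDeriv, fderiv_fun_mul hf hg, add_apply, smul_apply, smul_eq_mul]
  ring

theorem partialDeriv_sum {i : Fin d} {ι : Type*} {s : Finset ι}
    {F : ι → EuclideanSpace ℝ (Fin d) → ℝ} (hF : ∀ k ∈ s, DifferentiableAt ℝ (F k) X) :
    partialDeriv i (fun Y => ∑ k ∈ s, F k Y) X = ∑ k ∈ s, partialDeriv i (F k) X := by
  simp only [partialDeriv, fderiv_fun_sum hF, sum_apply]

theorem ContDiff.continuous_partialDeriv {i : Fin d} (hf : ContDiff ℝ 1 f) :
    Continuous (partialDeriv i f) :=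
  (hf.continuous_fderiv one_ne_zero).clm_apply continuous_const

theorem ContDiff.contDiff_partialDeriv {i : Fin d} {n : WithTop ℕ∞} (hf : ContDiff ℝ (n + 1) f) :
    ContDiff ℝ n (partialDeriv i f) :=
  (hf.fderiv_right le_rfl).clm_apply contDiff_const

theorem ContDiffAt.partialDeriv_partialDeriv_comm (hf : ContDiffAt ℝ 2 f X) (i j : Fin d) :
    partialDeriv i (partialDeriv j f) X = partialDeriv j (partialDeriv i f) X := by
  have hdiff : DifferentiableAt ℝ (fderiv ℝ f) X :=
    (hf.fderiv_right (m := 1) le_rfl).differentiableAt one_ne_zero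
  have hsecond : ∀ k l, partialDeriv k (partialDeriv l f) X =
      fderiv ℝ (fderiv ℝ f) X (EuclideanSpace.single k 1) (EuclideanSpace.single l 1) := by
    intro k l
    unfold partialDeriv
    rw [fderiv_clm_apply hdiff (differentiableAt_const _)]
    simp
  rw [hsecond, hsecond, hf.isSymmSndFDerivAt (by simp)]

end PartialDeriv

theorem integral_sum_mul_partialDeriv_eq_neg {d : ℕ} {F : Fin d → EuclideanSpace ℝ (Fin d) → ℝ}
    {v : EuclideanSpace ℝ (Fin d) → ℝ} (hF : ∀ i, ContDiff ℝ 1 (F i))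
    (hFcs : ∀ i, HasCompactSupport (F i)) (hv : ContDiff ℝ 1 v) :
    ∫ X, ∑ i, F i X * partialDeriv i v X = -∫ X, (∑ i, partialDeriv i (F i) X) * v X := by
  have hint : ∀ i, Integrable (fun X => F i X * partialDeriv i v X) := fun i =>
    ((hF i).continuous.mul hv.continuous_partialDeriv).integrable_of_hasCompactSupport
      (hFcs i).mul_right
  have hint' : ∀ i, Integrable (fun X => partialDeriv i (F i) X * v X) := fun i =>
    ((hF i).continuous_partialDeriv.mul hv.continuous).integrable_of_hasCompactSupport
      ((hFcs i).fderiv_apply ℝ _).mul_right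
  simp only [Finset.sum_mul]
  rw [integral_finsetSum _ fun i _ => hint i, integral_finsetSum _ fun i _ => hint' i,
    ← Finset.sum_neg_distrib]
  exact Finset.sum_congr rfl fun i _ =>
    integral_mul_fderiv_eq_neg_fderiv_mul_of_hasCompactSupport (hF i) hv (hFcs i) _

section MulVecGrad

variable {d : ℕ} {D : Fin d → Fin d → EuclideanSpace ℝ (Fin d) → ℝ}
  {u : EuclideanSpace ℝ (Fin d) → ℝ}

noncomputable def mulVecGrad (D : Fin d → Fin d → EuclideanSpace ℝ (Fin d) → ℝ)
    (u : EuclideanSpace ℝ (Fin d) → ℝ) (i : Fin d) (X : EuclideanSpace ℝ (Fin d)) : ℝ :=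
  ∑ j, D i j X * partialDeriv j u X

theorem support_mulVecGrad_subset (i : Fin d) :
    Function.support (mulVecGrad D u i) ⊆ tsupport u := by
  intro X hX
  by_contra hXu
  exact hX (Finset.sum_eq_zero fun j _ => by simp [partialDeriv, fderiv_of_notMem_tsupport ℝ hXu])

theorem contDiff_mulVecGrad {n : WithTop ℕ∞} {Ω : Set (EuclideanSpace ℝ (Fin d))} (hΩ : IsOpen Ω)
    (hD : ∀ i j, ContDiffOn ℝ n (D i j) Ω) (hu : ContDiff ℝ (n + 1) u) (huΩ : tsupport u ⊆ Ω)
    (i : Fin d) : ContDiff ℝ n (mulVecGrad D u i) :=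
  ContDiff.sum fun j _ => (hD i j).contDiff_mul_of_tsupport_subset hΩ hu.contDiff_partialDeriv
    ((tsupport_fderiv_apply_subset ℝ _).trans huΩ)

theorem sum_partialDeriv_mulVecGrad {X : EuclideanSpace ℝ (Fin d)}
    (hD : ∀ i j, DifferentiableAt ℝ (D i j) X) (hanti : ∀ i j, D i j X = -D j i X)
    (hu : ContDiffAt ℝ 2 u X) :
    ∑ i, partialDeriv i (mulVecGrad D u i) X
      = ∑ j, (∑ i, partialDeriv i (D i j) X) * partialDeriv j u X := by
  have hdu : ∀ j, DifferentiableAt ℝ (partialDeriv j u) X := fun j =>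
    ((hu.fderiv_right (m := 1) le_rfl).clm_apply contDiffAt_const).differentiableAt one_ne_zero
  have hsecond : ∑ i, ∑ j, D i j X * partialDeriv i (partialDeriv j u) X = 0 :=
    Finset.sum_sum_mul_eq_zero_of_antisymm_of_symm hanti hu.partialDeriv_partialDeriv_comm
  calc ∑ i, partialDeriv i (mulVecGrad D u i) X
      = ∑ i, ∑ j, (partialDeriv i (D i j) X * partialDeriv j u X
          + D i j X * partialDeriv i (partialDeriv j u) X) := by
        refine Finset.sum_congr rfl fun i _ => ?_
        unfold mulVecGrad
        rw [partialDeriv_sum (F := fun j Y => D i j Y * partialDeriv j u Y)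
          fun j _ => (hD i j).mul (hdu j)]
        exact Finset.sum_congr rfl fun j _ => partialDeriv_mul (hD i j) (hdu j)
    _ = ∑ j, (∑ i, partialDeriv i (D i j) X) * partialDeriv j u X := by
        simp only [Finset.sum_add_distrib, hsecond, add_zero, Finset.sum_mul]
        exact Finset.sum_comm

end MulVecGrad

theorem integration_by_parts_antisymm_general
    {d : ℕ}
    (Ω : Set (EuclideanSpace ℝ (Fin d))) (hΩ : IsOpen Ω)
    (D : Fin d → Fin d → EuclideanSpace ℝ (Fin d) → ℝ)
    (hD : ∀ i j, ContDiffOn ℝ 1 (D i j) Ω)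
    (hanti : ∀ X ∈ Ω, ∀ i j, D i j X = - D j i X)
    (u v : EuclideanSpace ℝ (Fin d) → ℝ)
    (hu : ContDiff ℝ (⊤ : ℕ∞) u) (hv : ContDiff ℝ (⊤ : ℕ∞) v)
    (hucs : HasCompactSupport u) (husupp : tsupport u ⊆ Ω) :
    ∫ X in Ω, (∑ i, (∑ j, D i j X * partialDeriv j u X) * partialDeriv i v X)
      = - ∫ X in Ω, (∑ j, (∑ i, partialDeriv i (D i j) X) * partialDeriv j u X) * v X := by
  have hu2 : ContDiff ℝ (1 + 1) u := hu.of_le (WithTop.coe_le_coe.2 le_top)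
  have hv1 : ContDiff ℝ 1 v := hv.of_le (WithTop.coe_le_coe.2 le_top)
  have hflux : ∀ i, ContDiff ℝ 1 (mulVecGrad D u i) := contDiff_mulVecGrad hΩ hD hu2 husupp
  have hfluxΩ : ∀ i, tsupport (mulVecGrad D u i) ⊆ Ω := fun i =>
    (closure_minimal (support_mulVecGrad_subset i) (isClosed_tsupport u)).trans husupp
  change ∫ X in Ω, ∑ i, mulVecGrad D u i X * partialDeriv i v X = _
  calc ∫ X in Ω, ∑ i, mulVecGrad D u i X * partialDeriv i v X
      = ∫ X, ∑ i, mulVecGrad D u i X * partialDeriv i v X :=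
        setIntegral_eq_integral_of_forall_compl_eq_zero fun X hX =>
          Finset.sum_eq_zero fun i _ => by
            rw [image_eq_zero_of_notMem_tsupport fun h => hX (hfluxΩ i h), zero_mul]
    _ = -∫ X, (∑ i, partialDeriv i (mulVecGrad D u i) X) * v X :=
        integral_sum_mul_partialDeriv_eq_neg hflux
          (fun i => hucs.mono' (support_mulVecGrad_subset i)) hv1
    _ = -∫ X in Ω, (∑ i, partialDeriv i (mulVecGrad D u i) X) * v X := by
        rw [setIntegral_eq_integral_of_forall_compl_eq_zero fun X hX => ?_]
        simp [partialDeriv, fderiv_of_notMem_tsupport ℝ fun h => hX (hfluxΩ _ h)]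
    _ = -∫ X in Ω, (∑ j, (∑ i, partialDeriv i (D i j) X) * partialDeriv j u X) * v X := by
        refine congrArg Neg.neg (setIntegral_congr_fun hΩ.measurableSet fun X hX => ?_)
        rw [sum_partialDeriv_mulVecGrad
          (fun i j => ((hD i j).differentiableOn one_ne_zero).differentiableAt (hΩ.mem_nhds hX))
          (hanti X hX) hu2.contDiffAt]

/-- **Integration by parts for antisymmetric matrices, smooth case**
(the `C_c^∞` case of Lemma 4.1 of the paper).  Let `Ω ⊆ ℝ^d` be open, let
`D = (d_{i,j})` be a continuously differentiable, pointwise antisymmetric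
matrix-valued function on `Ω`, and let `u, v` be smooth functions on `ℝ^d` whose
supports are compact subsets of `Ω`.  Then
`∫_Ω D∇u · ∇v = − ∫_Ω (div_C D) · ∇u · v`, where
`(div_C D)_j = Σ_i ∂_i d_{i,j}` is the vector of divergences of the columns of `D`. -/
theorem integration_by_parts_antisymm
    {d : ℕ} (hd : 1 ≤ d)
    (Ω : Set (EuclideanSpace ℝ (Fin d))) (hΩ : IsOpen Ω)
    (D : Fin d → Fin d → EuclideanSpace ℝ (Fin d) → ℝ)
    (hD : ∀ i j, ContDiffOn ℝ 1 (D i j) Ω)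
    (hanti : ∀ X ∈ Ω, ∀ i j, D i j X = - D j i X)
    (u v : EuclideanSpace ℝ (Fin d) → ℝ)
    (hu : ContDiff ℝ (⊤ : ℕ∞) u) (hv : ContDiff ℝ (⊤ : ℕ∞) v)
    (hucs : HasCompactSupport u) (husupp : tsupport u ⊆ Ω)
    (hvcs : HasCompactSupport v) (hvsupp : tsupport v ⊆ Ω) :
    ∫ X in Ω, (∑ i, (∑ j, D i j X * partialDeriv j u X) * partialDeriv i v X)
      = - ∫ X in Ω, (∑ j, (∑ i, partialDeriv i (D i j) X) * partialDeriv j u X) * v X :=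
  integration_by_parts_antisymm_general Ω hΩ D hD hanti u v hu hv hucs husupp
end
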